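/- arXiv:1204.4873 — 3 statements merged into one kernel-verified Lean document; each statement's English description precedes it below -/
import Mathlib

section
/- Let H and A be finitely generated abelian groups, Tors(A) the torsion subgroup of A, Ā = A/Tors(A), and π : A → Ā the projection. Let q : Γ(H, A) → Γ(H, Ā) be the well-defined map sending [ν] to [π ∘ ν]. Then for every surjective homomorphism μ : H → Ā, the fiber q⁻¹([μ]) = {[ν] ∈ Γ(H,A) : q([ν]) = [μ]} is in bijection with Γ(ker μ, Tors(A)) = Epi(ker μ, Tors(A))/Aut(Tors(A)). In particular, all fibers of q are in bijection with one another. -/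
/-- The set of surjective homomorphisms between two additive groups. -/
def EpiSet (G A : Type*) [AddGroup G] [AddGroup A] : Type _ :=
  {f : G →+ A // Function.Surjective f}

/-- Two epimorphisms are equivalent if they differ by an automorphism of the target. -/
def GammaRel (G A : Type*) [AddGroup G] [AddGroup A] (ν₁ ν₂ : EpiSet G A) : Prop :=
  ∃ α : A ≃+ A, ∀ g : G, α (ν₁.1 g) = ν₂.1 g

/-- The parameter set `Γ(G,A) = Epi(G,A)/Aut(A)`. -/
def GammaSet (G A : Type*) [AddGroup G] [AddGroup A] : Type _ :=
  Quot (GammaRel G A)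

/-- Composition of an epimorphism `H → A` with the projection `A → A/Tors(A)`. -/
def qRep {H A : Type*} [AddCommGroup H] [AddCommGroup A] (ν : EpiSet H A) :
    EpiSet H (A ⧸ AddCommGroup.torsion A) :=
  ⟨(QuotientAddGroup.mk' (AddCommGroup.torsion A)).comp ν.1,
    (QuotientAddGroup.mk'_surjective (AddCommGroup.torsion A)).comp ν.2⟩

/-!
Write `T = Tors A` and `Ā = A/T`. Since `Ā` is finitely generated and torsion free it is free, so
both `T ↪ A ↠ Ā` and `ker μ ↪ H ↠ Ā` split: `A ≅ T × Ā` and `H ≅ ker μ × Ā`. An epimorphism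
`κ : ker μ ↠ T` then gives the epimorphism `κ × id : H → A`, which lies over `μ`. Every class over
`[μ]` is of this form: an automorphism of `A` lifting one of `Ā` makes `π ∘ ν = μ`, and then
`ν = s ∘ (κ × id)` for a shear `s (t, b) = (t + d b, b)` of `T × Ā`. Two such maps are identified by
an automorphism of `A` only if the `κ`'s are, because every automorphism of `A` preserves `T`.

Since `Tors H ⊆ ker μ` and `rk ker μ = rk H - rk Ā`, the kernel `ker μ ≅ Tors H × ℤ^(rk H - rk Ā)`
does not depend on `μ`, which makes all fibers isomorphic.
-/

open AddCommGroup (torsion)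
open Module

section Splitting

variable {G P : Type*} [AddCommGroup G] [AddCommGroup P]

structure IsSplitting (N : AddSubgroup G) (f : G →+ P) (e : G ≃+ N × P) : Prop where
  apply_coe : ∀ n : N, e n = (n, 0)
  snd_apply : ∀ g, (e g).2 = f g

theorem exists_isSplitting [Projective ℤ P] (N : AddSubgroup G) (f : G →+ P) (hker : f.ker = N)
    (hf : Function.Surjective f) : ∃ e : G ≃+ N × P, IsSplitting N f e := by
  obtain ⟨s, hs⟩ := f.toIntLinearMap.exists_rightInverse_of_surjective
    (LinearMap.range_eq_top.2 hf)
  have hexact : Function.Exact N.subtype.toIntLinearMap f.toIntLinearMap := fun g => by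
    simp [← hker]
  let e := hexact.splitSurjectiveEquiv N.subtype_injective ⟨s, hs⟩
  exact ⟨e.1.toAddEquiv, fun n => e.1.eq_symm_apply.1 (LinearMap.congr_fun e.2.1 n),
    fun g => (LinearMap.congr_fun e.2.2 g).symm⟩

end Splitting

section FiniteInstances

variable {A : Type*} [AddCommGroup A] [Module.Finite ℤ A]

instance AddSubgroup.finite_int (K : AddSubgroup A) : Module.Finite ℤ K :=
  inferInstanceAs (Module.Finite ℤ K.toIntSubmodule)

instance QuotientAddGroup.finite_int (K : AddSubgroup A) : Module.Finite ℤ (A ⧸ K) :=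
  .of_surjective (QuotientAddGroup.mk' K).toIntLinearMap (QuotientAddGroup.mk'_surjective K)

end FiniteInstances

section Products

variable {K N P : Type*} [AddCommGroup K] [AddCommGroup N] [AddCommGroup P]

def AddEquiv.prodShear (d : P →+ N) : N × P ≃+ N × P where
  toFun x := (x.1 + d x.2, x.2)
  invFun x := (x.1 - d x.2, x.2)
  left_inv x := by simp
  right_inv x := by simp
  map_add' x y := by ext <;> simp [add_add_add_comm]

@[simp]
theorem AddEquiv.prodShear_apply (d : P →+ N) (x : N × P) :
    AddEquiv.prodShear d x = (x.1 + d x.2, x.2) :=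
  rfl

theorem AddMonoidHom.exists_eq_prodShear (ψ : K × P →+ N × P) (hψ : ∀ x, (ψ x).2 = x.2) :
    ∃ (κ : K →+ N) (d : P →+ N), ∀ x, ψ x = AddEquiv.prodShear d (κ x.1, x.2) := by
  refine ⟨(AddMonoidHom.fst N P).comp (ψ.comp (AddMonoidHom.inl K P)),
    (AddMonoidHom.fst N P).comp (ψ.comp (AddMonoidHom.inr K P)), fun x => ?_⟩
  have hx : ψ x = ψ (x.1, 0) + ψ (0, x.2) := by
    rw [← map_add, Prod.mk_add_mk, add_zero, zero_add]
  ext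
  · simp [hx]
  · simp [hψ]

end Products

section Torsion

variable {H F : Type*} [AddCommGroup H] [AddCommGroup F]

def AddEquiv.torsionCongr (e : H ≃+ F) : torsion H ≃+ torsion F :=
  (e.addSubgroupMap (torsion H)).trans (AddEquiv.addSubgroupCongr e.map_torsion)

@[simp]
theorem AddEquiv.coe_torsionCongr_apply (e : H ≃+ F) (t : torsion H) :
    (e.torsionCongr t : F) = e t :=
  rfl

theorem torsion_le_ker [IsAddTorsionFree F] (f : H →+ F) : torsion H ≤ f.ker := fun x hx => by
  have := AddCommGroup.le_comap_torsion f hx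
  rwa [AddCommGroup.isAddTorsionFree_iff_torsion_eq_bot.1 ‹_›, AddMonoidHom.comap_bot] at this

def AddSubgroup.torsionEquivOfLe (K : AddSubgroup H) (hK : torsion H ≤ K) :
    torsion K ≃+ torsion H :=
  (AddEquiv.addSubgroupCongr
    (AddCommGroup.comap_torsion_of_injective K.subtype_injective).symm).trans
    (AddSubgroup.addSubgroupOfEquivOfLe hK)

theorem nonempty_addEquiv_torsion_prod (M : Type*) [AddCommGroup M] [Module.Finite ℤ M] {n : ℕ}
    (hn : finrank ℤ M = n) : Nonempty (M ≃+ torsion M × (Fin n → ℤ)) := by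
  obtain ⟨e, -⟩ := exists_isSplitting (torsion M) (QuotientAddGroup.mk' _)
    (QuotientAddGroup.ker_mk' _) (QuotientAddGroup.mk'_surjective _)
  have hrank : finrank ℤ (M ⧸ torsion M) = n := finrank_quotient_torsion_eq.trans hn
  let b := (Module.finBasis ℤ (M ⧸ torsion M)).reindex (finCongr hrank)
  exact ⟨e.trans ((AddEquiv.refl _).prodCongr b.equivFun.toAddEquiv)⟩

variable [Module.Finite ℤ H]

theorem finrank_ker_add_finrank (f : H →+ F) (hf : Function.Surjective f) :
    finrank ℤ f.ker + finrank ℤ F = finrank ℤ H := by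
  rw [← (f.toIntLinearMap.quotKerEquivOfSurjective hf).finrank_eq, add_comm]
  exact Submodule.finrank_quotient_add_finrank _

theorem nonempty_ker_addEquiv_ker [IsAddTorsionFree F] {f f' : H →+ F}
    (hf : Function.Surjective f) (hf' : Function.Surjective f') : Nonempty (f.ker ≃+ f'.ker) := by
  obtain ⟨e⟩ := nonempty_addEquiv_torsion_prod f.ker (n := finrank ℤ H - finrank ℤ F)
    (by have := finrank_ker_add_finrank f hf; omega)
  obtain ⟨e'⟩ := nonempty_addEquiv_torsion_prod f'.ker (n := finrank ℤ H - finrank ℤ F)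
    (by have := finrank_ker_add_finrank f' hf'; omega)
  let τ := (f.ker.torsionEquivOfLe (torsion_le_ker f)).trans
    (f'.ker.torsionEquivOfLe (torsion_le_ker f')).symm
  exact ⟨e.trans ((τ.prodCongr (AddEquiv.refl _)).trans e'.symm)⟩

end Torsion

section Gamma

variable {G G' A : Type*} [AddGroup G] [AddGroup G'] [AddGroup A]

theorem gammaRel_equivalence (G A : Type*) [AddGroup G] [AddGroup A] :
    Equivalence (GammaRel G A) where
  refl _ := ⟨AddEquiv.refl A, fun _ => rfl⟩
  symm := fun ⟨α, h⟩ => ⟨α.symm, fun g => by rw [← h g, α.symm_apply_apply]⟩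
  trans := fun ⟨α, h⟩ ⟨β, h'⟩ => ⟨α.trans β, fun g => by rw [AddEquiv.trans_apply, h g, h' g]⟩

theorem GammaSet.mk_eq_mk_iff {ν ν' : EpiSet G A} :
    (Quot.mk _ ν : GammaSet G A) = Quot.mk _ ν' ↔ GammaRel G A ν ν' :=
  Quot.eq.trans (gammaRel_equivalence G A).eqvGen_iff

def EpiSet.congrLeft (e : G ≃+ G') : EpiSet G A ≃ EpiSet G' A where
  toFun ν := ⟨ν.1.comp e.symm.toAddMonoidHom, ν.2.comp e.symm.surjective⟩
  invFun ν := ⟨ν.1.comp e.toAddMonoidHom, ν.2.comp e.surjective⟩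
  left_inv ν := Subtype.ext (AddMonoidHom.ext fun _ => by simp)
  right_inv ν := Subtype.ext (AddMonoidHom.ext fun _ => by simp)

def GammaSet.congrLeft (e : G ≃+ G') : GammaSet G A ≃ GammaSet G' A :=
  Quot.congr (EpiSet.congrLeft e) fun ν ν' =>
    ⟨fun ⟨α, h⟩ => ⟨α, fun _ => h _⟩, fun ⟨α, h⟩ => ⟨α, fun g => by
      have h' : α (ν.1 (e.symm (e g))) = ν'.1 (e.symm (e g)) := h (e g)
      rwa [e.symm_apply_apply] at h'⟩⟩

end Gamma

def GammaSet.quotTorsion {H A : Type*} [AddCommGroup H] [AddCommGroup A] :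
    GammaSet H A → GammaSet H (A ⧸ torsion A) :=
  Quot.map qRep fun _ _ ⟨α, hα⟩ =>
    ⟨QuotientAddGroup.congr _ _ α α.map_torsion, fun h => congrArg (QuotientAddGroup.mk' _) (hα h)⟩

section Fiber

variable {H A : Type*} [AddCommGroup H] [AddCommGroup A]
  {eA : A ≃+ torsion A × (A ⧸ torsion A)}
  (heA : IsSplitting (torsion A) (QuotientAddGroup.mk' _) eA)
  {μ : EpiSet H (A ⧸ torsion A)} {eH : H ≃+ μ.1.ker × (A ⧸ torsion A)}
  (heH : IsSplitting μ.1.ker μ.1 eH)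

def liftEpi (eA : A ≃+ torsion A × (A ⧸ torsion A)) (eH : H ≃+ μ.1.ker × (A ⧸ torsion A))
    (κ : EpiSet μ.1.ker (torsion A)) : EpiSet H A :=
  ⟨eA.symm.toAddMonoidHom.comp ((κ.1.prodMap (AddMonoidHom.id _)).comp eH.toAddMonoidHom),
    eA.symm.surjective.comp ((κ.2.prodMap Function.surjective_id).comp eH.surjective)⟩

theorem liftEpi_apply (κ : EpiSet μ.1.ker (torsion A)) (h : H) :
    (liftEpi eA eH κ).1 h = eA.symm (κ.1 (eH h).1, (eH h).2) :=
  rfl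

include heA heH in
theorem liftEpi_apply_coe (κ : EpiSet μ.1.ker (torsion A)) (k : μ.1.ker) :
    (liftEpi eA eH κ).1 k = κ.1 k := by
  rw [liftEpi_apply, heH.apply_coe, eA.symm_apply_eq, heA.apply_coe]

include heA heH in
theorem qRep_liftEpi (κ : EpiSet μ.1.ker (torsion A)) : qRep (liftEpi eA eH κ) = μ :=
  Subtype.ext <| AddMonoidHom.ext fun h => by
    rw [← heH.snd_apply, qRep, AddMonoidHom.comp_apply, ← heA.snd_apply, liftEpi_apply,
      AddEquiv.apply_symm_apply]

theorem gammaRel_liftEpi {κ κ' : EpiSet μ.1.ker (torsion A)} (hκ : GammaRel _ _ κ κ') :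
    GammaRel H A (liftEpi eA eH κ) (liftEpi eA eH κ') := by
  obtain ⟨γ, hγ⟩ := hκ
  refine ⟨eA.trans ((γ.prodCongr (AddEquiv.refl _)).trans eA.symm), fun h => ?_⟩
  simp only [liftEpi_apply, AddEquiv.trans_apply, AddEquiv.apply_symm_apply]
  exact congrArg eA.symm (Prod.ext (hγ _) rfl)

include heA heH in
theorem gammaRel_of_gammaRel_liftEpi {κ κ' : EpiSet μ.1.ker (torsion A)}
    (hκ : GammaRel H A (liftEpi eA eH κ) (liftEpi eA eH κ')) : GammaRel _ _ κ κ' := by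
  obtain ⟨β, hβ⟩ := hκ
  refine ⟨β.torsionCongr, fun k => Subtype.ext ?_⟩
  simpa only [AddEquiv.coe_torsionCongr_apply, liftEpi_apply_coe heA heH] using hβ k

include heA in
theorem exists_gammaRel_qRep_eq (ν : EpiSet H A) (hν : GammaRel _ _ (qRep ν) μ) :
    ∃ ν' : EpiSet H A, GammaRel H A ν ν' ∧ qRep ν' = μ := by
  obtain ⟨α, hα⟩ := hν
  let β := eA.trans (((AddEquiv.refl _).prodCongr α).trans eA.symm)
  refine ⟨⟨β.toAddMonoidHom.comp ν.1, β.surjective.comp ν.2⟩, ⟨β, fun _ => rfl⟩,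
    Subtype.ext <| AddMonoidHom.ext fun h => ?_⟩
  calc (β (ν.1 h) : A ⧸ torsion A) = (eA (β (ν.1 h))).2 := (heA.snd_apply _).symm
    _ = α (eA (ν.1 h)).2 := by simp only [β, AddEquiv.trans_apply, AddEquiv.apply_symm_apply]; rfl
    _ = μ.1 h := by rw [heA.snd_apply, ← hα h]; rfl

include heA heH in
theorem exists_liftEpi_gammaRel (ν : EpiSet H A) (hν : qRep ν = μ) :
    ∃ κ, GammaRel H A (liftEpi eA eH κ) ν := by
  let ψ := eA.toAddMonoidHom.comp (ν.1.comp eH.symm.toAddMonoidHom)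
  have hψ : ∀ x, (ψ x).2 = x.2 := fun x =>
    calc (ψ x).2 = QuotientAddGroup.mk' _ (ν.1 (eH.symm x)) := heA.snd_apply _
      _ = μ.1 (eH.symm x) := DFunLike.congr_fun (congrArg Subtype.val hν) _
      _ = x.2 := by rw [← heH.snd_apply, AddEquiv.apply_symm_apply]
  obtain ⟨κ, d, hψκ⟩ := ψ.exists_eq_prodShear hψ
  have hκ : Function.Surjective κ := fun t => by
    obtain ⟨h, hh⟩ := ν.2 t
    have ht := hψκ (eH h)
    simp only [ψ, AddMonoidHom.comp_apply, AddEquiv.coe_toAddMonoidHom, AddEquiv.symm_apply_apply,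
      hh, heA.apply_coe, AddEquiv.prodShear_apply, Prod.mk.injEq] at ht
    exact ⟨(eH h).1, by rw [ht.1, ← ht.2, map_zero, add_zero]⟩
  refine ⟨⟨κ, hκ⟩, eA.trans ((AddEquiv.prodShear d).trans eA.symm), fun h => ?_⟩
  change eA.symm (AddEquiv.prodShear d (eA (eA.symm (κ (eH h).1, (eH h).2)))) = ν.1 h
  rw [AddEquiv.apply_symm_apply, ← hψκ]
  simp [ψ]

def liftGamma (eA : A ≃+ torsion A × (A ⧸ torsion A)) (eH : H ≃+ μ.1.ker × (A ⧸ torsion A)) :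
    GammaSet μ.1.ker (torsion A) → GammaSet H A :=
  Quot.map (liftEpi eA eH) fun _ _ => gammaRel_liftEpi

include heA heH in
theorem liftGamma_injective : Function.Injective (liftGamma eA eH) := by
  rintro ⟨κ⟩ ⟨κ'⟩ h
  exact Quot.sound (gammaRel_of_gammaRel_liftEpi heA heH (GammaSet.mk_eq_mk_iff.1 h))

include heA heH in
theorem quotTorsion_eq_mk_iff_mem_range (c : GammaSet H A) :
    c.quotTorsion = Quot.mk _ μ ↔ c ∈ Set.range (liftGamma eA eH) := by
  refine ⟨fun hc => ?_, ?_⟩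
  · obtain ⟨ν, rfl⟩ := Quot.exists_rep c
    obtain ⟨ν', hνν', hν'⟩ := exists_gammaRel_qRep_eq heA ν (GammaSet.mk_eq_mk_iff.1 hc)
    obtain ⟨κ, hκ⟩ := exists_liftEpi_gammaRel heA heH ν' hν'
    exact ⟨Quot.mk _ κ, (Quot.sound hκ).trans (Quot.sound hνν').symm⟩
  · rintro ⟨⟨κ⟩, rfl⟩
    exact congrArg (Quot.mk _) (qRep_liftEpi heA heH κ)

noncomputable def quotTorsionFiberEquiv :
    {c : GammaSet H A // c.quotTorsion = Quot.mk _ μ} ≃ GammaSet μ.1.ker (torsion A) :=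
  (Equiv.subtypeEquivRight (quotTorsion_eq_mk_iff_mem_range heA heH)).trans
    (Equiv.ofInjective _ (liftGamma_injective heA heH)).symm

end Fiber

theorem nonempty_quotTorsion_fiber_equiv {H A : Type*} [AddCommGroup H] [AddCommGroup A]
    [AddGroup.FG A] (μ : EpiSet H (A ⧸ torsion A)) :
    Nonempty ({c : GammaSet H A // c.quotTorsion = Quot.mk _ μ} ≃
      GammaSet μ.1.ker (torsion A)) := by
  obtain ⟨eA, heA⟩ := exists_isSplitting (torsion A) (QuotientAddGroup.mk' _)
    (QuotientAddGroup.ker_mk' _) (QuotientAddGroup.mk'_surjective _)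
  obtain ⟨eH, heH⟩ := exists_isSplitting μ.1.ker μ.1 rfl μ.2
  exact ⟨quotTorsionFiberEquiv heA heH⟩

/-- Each fiber of the projection `q : Γ(H,A) → Γ(H,Ā)` over a class `[μ]` is in
bijection with `Γ(ker μ, Tors(A))`; in particular all fibers of `q` are in bijection
with one another. -/
theorem statement3 {H A : Type*} [AddCommGroup H] [AddGroup.FG H]
    [AddCommGroup A] [AddGroup.FG A]
    (q : GammaSet H A → GammaSet H (A ⧸ AddCommGroup.torsion A))
    (hq : ∀ ν : EpiSet H A, q (Quot.mk _ ν) = Quot.mk _ (qRep ν)) :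
    (∀ μ : EpiSet H (A ⧸ AddCommGroup.torsion A),
      Nonempty ({c : GammaSet H A // q c = Quot.mk _ μ} ≃
        GammaSet ↥μ.1.ker ↥(AddCommGroup.torsion A))) ∧
    ∀ b b' : GammaSet H (A ⧸ AddCommGroup.torsion A),
      Nonempty ({c : GammaSet H A // q c = b} ≃ {c : GammaSet H A // q c = b'}) := by
  obtain rfl : q = GammaSet.quotTorsion := funext (Quot.ind hq)
  refine ⟨nonempty_quotTorsion_fiber_equiv, fun b b' => ?_⟩
  obtain ⟨μ, rfl⟩ := Quot.exists_rep b
  obtain ⟨μ', rfl⟩ := Quot.exists_rep b'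
  obtain ⟨E⟩ := nonempty_quotTorsion_fiber_equiv μ
  obtain ⟨E'⟩ := nonempty_quotTorsion_fiber_equiv μ'
  obtain ⟨e⟩ := nonempty_ker_addEquiv_ker μ.2 μ'.2
  exact ⟨E.trans ((GammaSet.congrLeft e).trans E'.symm)⟩
end

section
/- Let H and A be finitely generated abelian groups such that there exists a surjective homomorphism H → A; let Ā = A/Tors(A) and π : A → Ā the projection, and let q : Γ(H, A) → Γ(H, Ā) be the map [ν] ↦ [π ∘ ν]. For any subgroup ξ ≤ H, define σ_A(ξ) = {[ν] ∈ Γ(H,A) : rank(ker ν + ξ) < rank H} and σ_Ā(ξ) = {[μ] ∈ Γ(H,Ā) : rank(ker μ + ξ) < rank H}. Then: (i) q(σ_A(ξ)) = σ_Ā(ξ); and (ii) q⁻¹(σ_Ā(ξ)) = σ_A(ξ). -/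
open scoped TensorProduct

/-- The rank of a f.g. abelian group, `dim_ℚ (B ⊗ ℚ)`. -/
noncomputable def rkOf (B : Type*) [AddCommGroup B] : ℕ :=
  Module.finrank ℚ (ℚ ⊗[ℤ] B)

/-- The "special Schubert variety" `σ_A(ξ) ⊆ Γ(H,A)`. -/
def sigmaSet {H : Type*} [AddCommGroup H] (A : Type*) [AddCommGroup A]
    (ξ : AddSubgroup H) : Set (GammaSet H A) :=
  {c | ∃ ν : EpiSet H A, Quot.mk _ ν = c ∧ rkOf ↥(ν.1.ker ⊔ ξ) < rkOf H}

/-! Because `A ⧸ Tors(A)` is torsion-free, every element of `ker (π ∘ ν) + ξ` has a nonzero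
multiple in `ker ν + ξ`, so the two subgroups have the same rank; hence `[ν] ∈ σ_A(ξ)` iff
`q [ν] ∈ σ_Ā(ξ)`, which is (ii), and (i) follows once `q` is surjective.

For surjectivity: `Ā` is free, so an epimorphism `μ : H → Ā` splits `H ≅ ker μ × Ā`. The kernels
of two such epimorphisms contain `Tors(H)` and have the same rank, and over a PID a submodule
containing the torsion is the torsion times a free module, so the kernels are isomorphic and
`Aut(H)` acts transitively on `Epi(H, Ā)`. Precomposing an epimorphism `λ : H → A` with the
automorphism carrying `π ∘ λ` to `μ` lifts `μ`. -/

open Module Submodule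

section Ring

variable {R M P : Type*} [Ring R] [AddCommGroup M] [Module R M] [AddCommGroup P] [Module R P]

theorem LinearMap.exists_equiv_ker_prod_of_surjective [Module.Projective R P] (f : M →ₗ[R] P)
    (hf : Function.Surjective f) : ∃ e : M ≃ₗ[R] LinearMap.ker f × P, ∀ m, (e m).2 = f m := by
  obtain ⟨s, hs⟩ := Module.projective_lifting_property f LinearMap.id hf
  obtain ⟨e, he⟩ := ((LinearMap.exact_subtype_ker_map f).splitSurjectiveEquiv
    (LinearMap.ker f).injective_subtype ⟨s, hs⟩)
  exact ⟨e, fun m => (LinearMap.congr_fun he.2 m).symm⟩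

end Ring

section Domain

variable {R M N : Type*} [CommRing R] [IsDomain R] [AddCommGroup M] [Module R M]
  [AddCommGroup N] [Module R N]

theorem Submodule.torsion_le_ker [IsTorsionFree R N] (f : M →ₗ[R] N) :
    torsion R M ≤ LinearMap.ker f := by
  rintro x ⟨a, ha⟩
  rw [LinearMap.mem_ker,
    ← (IsRegular.of_ne_zero (nonZeroDivisors.coe_ne_zero a)).smul_eq_zero_iff_right, ← map_smul,
    ← Submonoid.smul_def, ha, map_zero]

theorem LinearMap.finrank_ker_add_of_surjective [Module.Finite R M] {f : M →ₗ[R] N}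
    (hf : Function.Surjective f) : finrank R (LinearMap.ker f) + finrank R N = finrank R M := by
  rw [← (f.quotKerEquivOfSurjective hf).finrank_eq, add_comm, finrank_quotient_add_finrank]

theorem LinearMap.finrank_eq_of_injective_of_forall_smul_mem_range {f : M →ₗ[R] N}
    (hf : Function.Injective f) (h : ∀ y, ∃ a : R, a ≠ 0 ∧ a • y ∈ LinearMap.range f) :
    finrank R M = finrank R N := by
  have hcoker : Module.rank R (N ⧸ LinearMap.range f) = 0 := by
    refine rank_eq_zero_iff.mpr fun y => ?_
    induction y using Submodule.Quotient.induction_on with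
    | H y =>
      obtain ⟨a, ha, hy⟩ := h y
      exact ⟨a, ha, by rwa [← Submodule.Quotient.mk_smul, Submodule.Quotient.mk_eq_zero]⟩
  have := (LinearMap.range f).rank_quotient_add_rank
  rw [hcoker, zero_add] at this
  rw [← LinearMap.finrank_range_of_inj hf, finrank, this, finrank]

end Domain

section CommRing

variable {R M : Type*} [CommRing R] [AddCommGroup M] [Module R M]

theorem Submodule.finrank_range_mkQ_torsion_comp_subtype (N : Submodule R M) :
    finrank R (LinearMap.range ((torsion R M).mkQ ∘ₗ N.subtype)) = finrank R N := by
  refine (LinearMap.quotKerEquivRange _).finrank_eq.symm.trans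
    (finrank_quotient_eq_of_le_torsion fun x hx => ?_)
  obtain ⟨a, ha⟩ : (x : M) ∈ torsion R M := by simpa using hx
  exact ⟨a, Subtype.ext ha⟩

end CommRing

section PID

variable {R M F : Type*} [CommRing R] [IsDomain R] [IsPrincipalIdealRing R]
  [AddCommGroup M] [Module R M] [Module.Finite R M] [AddCommGroup F] [Module R F]

theorem Submodule.nonempty_equiv_torsion_prod {N : Submodule R M} (hN : torsion R M ≤ N) :
    Nonempty (N ≃ₗ[R] torsion R M × LinearMap.range ((torsion R M).mkQ ∘ₗ N.subtype)) := by
  set g := (torsion R M).mkQ ∘ₗ N.subtype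
  have hker : LinearMap.ker g.rangeRestrict = (torsion R M).comap N.subtype := by
    rw [LinearMap.ker_rangeRestrict, LinearMap.ker_comp, ker_mkQ]
  obtain ⟨e, -⟩ := g.rangeRestrict.exists_equiv_ker_prod_of_surjective g.surjective_rangeRestrict
  exact ⟨e.trans (((LinearEquiv.ofEq _ _ hker).trans
    (comapSubtypeEquivOfLe hN)).prodCongr (LinearEquiv.refl _ _))⟩

theorem Submodule.nonempty_equiv_of_torsion_le {N N' : Submodule R M} (hN : torsion R M ≤ N)
    (hN' : torsion R M ≤ N') (h : finrank R N = finrank R N') : Nonempty (N ≃ₗ[R] N') := by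
  obtain ⟨e⟩ := nonempty_equiv_torsion_prod hN
  obtain ⟨e'⟩ := nonempty_equiv_torsion_prod hN'
  have eFree := LinearEquiv.ofFinrankEq (R := R)
    (LinearMap.range ((torsion R M).mkQ ∘ₗ N.subtype))
    (LinearMap.range ((torsion R M).mkQ ∘ₗ N'.subtype)) (by
      rw [finrank_range_mkQ_torsion_comp_subtype, finrank_range_mkQ_torsion_comp_subtype, h])
  exact ⟨e.trans (((LinearEquiv.refl R _).prodCongr eFree).trans e'.symm)⟩

theorem LinearMap.exists_linearEquiv_comp_eq_of_surjective [Module.Free R F] [Module.Finite R F]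
    {f g : M →ₗ[R] F} (hf : Function.Surjective f) (hg : Function.Surjective g) :
    ∃ e : M ≃ₗ[R] M, f ∘ₗ e.toLinearMap = g := by
  obtain ⟨ef, hef⟩ := f.exists_equiv_ker_prod_of_surjective hf
  obtain ⟨eg, heg⟩ := g.exists_equiv_ker_prod_of_surjective hg
  obtain ⟨eK⟩ := nonempty_equiv_of_torsion_le (torsion_le_ker g) (torsion_le_ker f) (by
    have := finrank_ker_add_of_surjective hf
    have := finrank_ker_add_of_surjective hg
    omega)
  refine ⟨eg.trans ((eK.prodCongr (LinearEquiv.refl R F)).trans ef.symm), LinearMap.ext fun m => ?_⟩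
  simpa [heg] using (hef (ef.symm ((eK.prodCongr (LinearEquiv.refl R F)) (eg m)))).symm

end PID

theorem AddSubgroup.finrank_eq_of_le_of_forall_zsmul_mem {G : Type*} [AddCommGroup G]
    {N N' : AddSubgroup G} (hle : N ≤ N') (h : ∀ x ∈ N', ∃ n : ℤ, n ≠ 0 ∧ n • x ∈ N) :
    finrank ℤ N = finrank ℤ N' := by
  refine LinearMap.finrank_eq_of_injective_of_forall_smul_mem_range
    (f := (AddSubgroup.inclusion hle).toIntLinearMap) (AddSubgroup.inclusion_injective hle) ?_
  rintro ⟨y, hy⟩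
  obtain ⟨n, hn, hny⟩ := h y hy
  exact ⟨n, hn, ⟨n • y, hny⟩, rfl⟩

theorem rkOf_eq_finrank (B : Type*) [AddCommGroup B] : rkOf B = finrank ℤ B := by
  have : IsLocalizedModule (nonZeroDivisors ℤ) (TensorProduct.mk ℤ ℚ B 1) :=
    (isLocalizedModule_iff_isBaseChange _ ℚ _).mpr (TensorProduct.isBaseChange ℤ B ℚ)
  rw [rkOf, ← IsLocalizedModule.finrank_eq (nonZeroDivisors ℤ) (TensorProduct.mk ℤ ℚ B 1) le_rfl]
  exact IsLocalization.finrank_eq ℚ (nonZeroDivisors ℤ) le_rfl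

section Gamma

variable {G A : Type*} [AddGroup G] [AddGroup A]

theorem GammaRel.ker_eq {ν₁ ν₂ : EpiSet G A} (h : GammaRel G A ν₁ ν₂) : ν₁.1.ker = ν₂.1.ker := by
  obtain ⟨α, hα⟩ := h
  ext x
  rw [AddMonoidHom.mem_ker, AddMonoidHom.mem_ker, ← hα x, AddEquiv.map_eq_zero_iff]

def GammaSet.ker : GammaSet G A → AddSubgroup G :=
  Quot.lift (fun ν => ν.1.ker) fun _ _ => GammaRel.ker_eq

end Gamma

theorem mk_mem_sigmaSet_iff {H A : Type*} [AddCommGroup H] [AddCommGroup A] {ξ : AddSubgroup H}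
    (ν : EpiSet H A) : Quot.mk _ ν ∈ sigmaSet A ξ ↔ rkOf ↥(ν.1.ker ⊔ ξ) < rkOf H := by
  refine ⟨fun ⟨μ, hμ, hrk⟩ => ?_, fun hrk => ⟨ν, rfl, hrk⟩⟩
  rwa [show μ.1.ker = ν.1.ker from congrArg GammaSet.ker hμ] at hrk

section Torsion

variable {H A : Type*} [AddCommGroup H] [AddCommGroup A]

theorem finrank_ker_qRep_sup (ν : EpiSet H A) (ξ : AddSubgroup H) :
    finrank ℤ ↥((qRep ν).1.ker ⊔ ξ) = finrank ℤ ↥(ν.1.ker ⊔ ξ) := by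
  have hker : ∀ x, x ∈ (qRep ν).1.ker ↔ ν.1 x ∈ AddCommGroup.torsion A := fun x =>
    QuotientAddGroup.eq_zero_iff _
  refine (AddSubgroup.finrank_eq_of_le_of_forall_zsmul_mem (sup_le_sup_right (fun x hx => ?_) ξ)
    fun x hx => ?_).symm
  · rw [hker, AddMonoidHom.mem_ker.mp hx]
    exact zero_mem _
  obtain ⟨k, hk, s, hs, rfl⟩ := AddSubgroup.mem_sup.mp hx
  obtain ⟨n, hn, hnk⟩ := isOfFinAddOrder_iff_nsmul_eq_zero.mp ((hker k).mp hk)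
  refine ⟨n, by exact_mod_cast hn.ne', ?_⟩
  rw [smul_add]
  refine AddSubgroup.add_mem_sup ?_ (AddSubgroup.zsmul_mem _ hs _)
  rw [AddMonoidHom.mem_ker, map_zsmul, natCast_zsmul, hnk]

theorem mk_qRep_mem_sigmaSet_iff {ξ : AddSubgroup H} (ν : EpiSet H A) :
    Quot.mk _ (qRep ν) ∈ sigmaSet (A ⧸ AddCommGroup.torsion A) ξ ↔ Quot.mk _ ν ∈ sigmaSet A ξ := by
  simp only [mk_mem_sigmaSet_iff, rkOf_eq_finrank, finrank_ker_qRep_sup]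

theorem exists_qRep_eq [AddGroup.FG H] (lam : EpiSet H A)
    (μ : EpiSet H (A ⧸ AddCommGroup.torsion A)) : ∃ ν : EpiSet H A, qRep ν = μ := by
  have : Module.Finite ℤ H := Module.Finite.iff_addGroup_fg.mpr ‹_›
  have : Module.Finite ℤ (A ⧸ AddCommGroup.torsion A) :=
    Module.Finite.of_surjective μ.1.toIntLinearMap μ.2
  obtain ⟨e, he⟩ := LinearMap.exists_linearEquiv_comp_eq_of_surjective
    (f := (qRep lam).1.toIntLinearMap) (g := μ.1.toIntLinearMap) (qRep lam).2 μ.2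
  refine ⟨⟨lam.1.comp e.toAddEquiv.toAddMonoidHom, lam.2.comp e.surjective⟩,
    Subtype.ext (AddMonoidHom.ext fun x => LinearMap.congr_fun he x)⟩

end Torsion

theorem statement10_general {H A : Type*} [AddCommGroup H] [AddGroup.FG H]
    [AddCommGroup A]
    (hex : Nonempty (EpiSet H A)) (ξ : AddSubgroup H)
    (q : GammaSet H A → GammaSet H (A ⧸ AddCommGroup.torsion A))
    (hq : ∀ ν : EpiSet H A, q (Quot.mk _ ν) = Quot.mk _ (qRep ν)) :
    q '' sigmaSet A ξ = sigmaSet (A ⧸ AddCommGroup.torsion A) ξ ∧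
    q ⁻¹' sigmaSet (A ⧸ AddCommGroup.torsion A) ξ = sigmaSet A ξ := by
  have hpre : q ⁻¹' sigmaSet (A ⧸ AddCommGroup.torsion A) ξ = sigmaSet A ξ := by
    ext c
    obtain ⟨ν, rfl⟩ := Quot.exists_rep c
    change q (Quot.mk _ ν) ∈ sigmaSet _ ξ ↔ _
    rw [hq]
    exact mk_qRep_mem_sigmaSet_iff ν
  have hsurj : Function.Surjective q := by
    obtain ⟨lam⟩ := hex
    rintro ⟨μ⟩
    obtain ⟨ν, rfl⟩ := exists_qRep_eq lam μ
    exact ⟨_, hq ν⟩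
  exact ⟨by rw [← hpre, Set.image_preimage_eq _ hsurj], hpre⟩

/-- The natural projection `q : Γ(H,A) → Γ(H,Ā)` maps `σ_A(ξ)` onto `σ_Ā(ξ)`, and
`σ_A(ξ)` is the full preimage of `σ_Ā(ξ)`. -/
theorem statement10 {H A : Type*} [AddCommGroup H] [AddGroup.FG H]
    [AddCommGroup A] [AddGroup.FG A]
    (hex : Nonempty (EpiSet H A)) (ξ : AddSubgroup H)
    (q : GammaSet H A → GammaSet H (A ⧸ AddCommGroup.torsion A))
    (hq : ∀ ν : EpiSet H A, q (Quot.mk _ ν) = Quot.mk _ (qRep ν)) :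
    q '' sigmaSet A ξ = sigmaSet (A ⧸ AddCommGroup.torsion A) ξ ∧
    q ⁻¹' sigmaSet (A ⧸ AddCommGroup.torsion A) ξ = sigmaSet A ξ :=
  statement10_general hex ξ q hq
end

section
/- Let H and A be finitely generated abelian groups, ν : H → A a surjective homomorphism, ξ ≤ H a subgroup, and η ∈ Ĥ a character. Then the set {ρ ∈ Ĥ : ρ(x) = 1 for all x ∈ ker ν, and (η⁻¹ρ)(y) = 1 for all y ∈ ξ} (that is, im(ν̂) ∩ ηV(ξ)) is infinite if and only if rank(ker ν + ξ) < rank H and η(z) = 1 for all z ∈ ker ν ∩ ξ. In particular, taking η = 1: im(ν̂) ∩ V(ξ) is infinite if and only if rank(ker ν + ξ) < rank H. -/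
/-! Write `K = ker ν` and `N = K + ξ`. The set in question is `V(K) ∩ ηV(ξ)`. Since `ℂˣ` is
divisible, hence an injective `ℤ`-module, a character of a subgroup extends to `H`; so this set
is nonempty exactly when `η` is trivial on `K ∩ ξ`, and then it is a coset `ρ₀V(N)`.
Finally `V(N) ≅ (H/N)^`, the dual of a finitely generated abelian group is infinite iff the
group is (a finite group has only root-of-unity-valued characters, an infinite one surjects onto
`ℤ`), and `H/N` is infinite iff `rank N < rank H`. -/

open scoped TensorProduct Pointwise

/-- The character group of an (additively written) abelian group. -/
abbrev CharGp (H : Type*) [AddCommGroup H] : Type _ := Multiplicative H →* ℂˣ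

/-- `V(ξ)`, the set of characters vanishing (i.e. taking value 1) on a subgroup `ξ`. -/
def charV {H : Type*} [AddCommGroup H] (ξ : AddSubgroup H) : Set (CharGp H) :=
  {ρ | ∀ x ∈ ξ, ρ (Multiplicative.ofAdd x) = 1}

/-- The primitive closure of a subgroup of an abelian group. -/
def pclose {H : Type*} [AddCommGroup H] (ξ : AddSubgroup H) : AddSubgroup H where
  carrier := {x | ∃ m : ℕ, 0 < m ∧ m • x ∈ ξ}
  zero_mem' := ⟨1, Nat.one_pos, by simpa using ξ.zero_mem⟩
  add_mem' := by
    rintro a b ⟨m, hm, ha⟩ ⟨k, hk, hb⟩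
    refine ⟨m * k, Nat.mul_pos hm hk, ?_⟩
    rw [smul_add]
    exact ξ.add_mem (by rw [mul_comm, mul_smul]; exact ξ.nsmul_mem ha k)
      (by rw [mul_smul]; exact ξ.nsmul_mem hb m)
  neg_mem' := by
    rintro a ⟨m, hm, ha⟩
    exact ⟨m, hm, by rw [smul_neg]; exact ξ.neg_mem ha⟩

/-- A subgroup is primitive if it equals its primitive closure. -/
def IsPrimitiveSub {H : Type*} [AddCommGroup H] (ξ : AddSubgroup H) : Prop :=
  pclose ξ = ξ

/-- The determinant group `ξ̄/ξ` of a subgroup. -/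
def detGroup {H : Type*} [AddCommGroup H] (ξ : AddSubgroup H) : Type _ :=
  ↥(pclose ξ) ⧸ ξ.addSubgroupOf (pclose ξ)

noncomputable instance {H : Type*} [AddCommGroup H] (ξ : AddSubgroup H) :
    AddCommGroup (detGroup ξ) := by unfold detGroup; infer_instance

/-- The largest order of an element of `K`. -/
noncomputable def maxOrder (K : Type*) [AddGroup K] : ℕ :=
  sSup (Set.range fun g : K => addOrderOf g)

/-- The translate `η·V(ξ)` of the "subtorus" `V(ξ)` by the character `η`. -/
def transTorus {H : Type*} [AddCommGroup H] (η : CharGp H) (ξ : AddSubgroup H) :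
    Set (CharGp H) :=
  (η * ·) '' charV ξ

/-- `S` is a maximal positive-dimensional torsion-translated subtorus inside `W`. -/
def MaxTransTorusIn {H : Type*} [AddCommGroup H] (S W : Set (CharGp H)) : Prop :=
  S.Infinite ∧ S ⊆ W ∧
    ∀ (χ : AddSubgroup H) (η' : CharGp H), IsPrimitiveSub χ → IsOfFinOrder η' →
      S ⊆ transTorus η' χ → transTorus η' χ ⊆ W → transTorus η' χ = S

/-- The collection `Ξ_d(W)` of subgroups of `H` attached to a subvariety `W` of the
character group. -/
def Xi {H : Type*} [AddCommGroup H] (d : ℕ) (W : Set (CharGp H)) : Set (AddSubgroup H) :=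
  {ξ | IsAddCyclic (detGroup ξ) ∧ Nat.card (detGroup ξ) ∣ d ∧
    ∃ η : CharGp H, IsOfFinOrder η ∧ orderOf η = Nat.card (detGroup ξ) ∧
      (∀ x ∈ ξ, η (Multiplicative.ofAdd x) = 1) ∧
      {x : H | x ∈ pclose ξ ∧ η (Multiplicative.ofAdd x) = 1} = (ξ : Set H) ∧
      MaxTransTorusIn (transTorus η (pclose ξ)) W}

/-- Evaluation of an element of the group algebra `ℂ[H]` at a character, i.e. the
`ℂ`-algebra homomorphism `ℂ[H] → ℂ` extending the character. -/
noncomputable def evalAt {H : Type*} [AddCommGroup H] (ρ : CharGp H) :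
    AddMonoidAlgebra ℂ H →ₐ[ℂ] ℂ :=
  AddMonoidAlgebra.lift ℂ ℂ H ((Units.coeHom ℂ).comp ρ)

/-- `W` is a Zariski closed subset of the character group. -/
def IsZarClosed {H : Type*} [AddCommGroup H] (W : Set (CharGp H)) : Prop :=
  ∃ S : Set (AddMonoidAlgebra ℂ H), W = {ρ | ∀ f ∈ S, evalAt ρ f = 0}

/-- The support of a module: the set of maximal ideals at which the localization is
nonzero. -/
def suppMax (S M : Type*) [CommRing S] [AddCommGroup M] [Module S M] :
    Set (MaximalSpectrum S) :=
  {m | haveI := m.isMaximal.isPrime; Nontrivial (LocalizedModule m.asIdeal.primeCompl M)}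

open Multiplicative

theorem Module.Baer.additive_units_complex : Module.Baer ℤ (Additive ℂˣ) := by
  let _ : DivisibleBy (Additive ℂˣ) ℤ :=
    Function.Surjective.divisibleBy
      (fun z : ℂ => Additive.ofMul (Units.mk0 (Complex.exp z) (Complex.exp_ne_zero z)))
      (fun w => ⟨Complex.log ((Additive.toMul w : ℂˣ) : ℂ), by
        apply Additive.toMul.injective; ext; simp [Complex.exp_log]⟩)
      (fun z n => by
        apply Additive.toMul.injective; ext; simp [Complex.exp_int_mul])
  exact Module.Baer.of_divisible _

theorem CharGp.exists_comp_eq {B C : Type*} [AddCommGroup B] [AddCommGroup C] (f : B →+ C)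
    (g : CharGp B) (hg : ∀ b ∈ f.ker, g (ofAdd b) = 1) :
    ∃ χ : CharGp C, χ.comp f.toMultiplicative = g := by
  obtain ⟨h, hh⟩ := Module.Baer.additive_units_complex.extension_property_addMonoidHom
    (QuotientAddGroup.kerLift f) (QuotientAddGroup.kerLift_injective f)
    (QuotientAddGroup.lift f.ker (MonoidHom.toAdditiveRight g) hg)
  refine ⟨AddMonoidHom.toMultiplicativeLeft h, MonoidHom.ext fun b => ?_⟩
  exact congr(Additive.toMul ($hh (b.toAdd : B ⧸ f.ker)))

instance CharGp.finite (B : Type*) [AddCommGroup B] [Finite B] : Finite (CharGp B) := by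
  have hroot (ρ : CharGp B) (b : B) : ρ (ofAdd b) ∈ rootsOfUnity (Nat.card B) ℂ := by
    rw [mem_rootsOfUnity, ← map_pow, ← ofAdd_nsmul, card_nsmul_eq_zero', ofAdd_zero, map_one]
  refine Finite.of_injective
    (fun ρ (b : B) => (⟨ρ (ofAdd b), hroot ρ b⟩ : rootsOfUnity (Nat.card B) ℂ)) fun ρ σ h => ?_
  ext b
  exact congr(((($h b) : ℂˣ) : ℂ))

theorem AddCommGroup.exists_addMonoidHom_int_apply_eq_one (B : Type*) [AddCommGroup B]
    [AddGroup.FG B] [Infinite B] : ∃ (φ : B →+ ℤ) (b : B), φ b = 1 := by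
  obtain ⟨n, ι, _, p, hp, e, ⟨f⟩⟩ := AddCommGroup.equiv_free_prod_directSum_zmod B
  rcases n.eq_zero_or_pos with rfl | hn
  · have (i : ι) : NeZero (p i ^ e i) := ⟨pow_ne_zero _ (hp i).ne_zero⟩
    have : Finite (DirectSum ι fun i => ZMod (p i ^ e i)) :=
      Finite.of_equiv _ DFinsupp.equivFunOnFintype.symm
    have : Finite B := Finite.of_equiv _ f.symm.toEquiv
    exact (not_finite B).elim
  · exact ⟨(Finsupp.applyAddHom ⟨0, hn⟩).comp ((AddMonoidHom.fst _ _).comp f.toAddMonoidHom),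
      f.symm (Finsupp.single ⟨0, hn⟩ 1, 0), by simp⟩

instance Units.infinite_of_infinite {G₀ : Type*} [GroupWithZero G₀] [Infinite G₀] :
    Infinite G₀ˣ :=
  have : Infinite {a : G₀ // a ≠ 0} := (Set.finite_singleton 0).infinite_compl.to_subtype
  Infinite.of_injective _ unitsEquivNeZero.symm.injective

instance CharGp.infinite (B : Type*) [AddCommGroup B] [AddGroup.FG B] [Infinite B] :
    Infinite (CharGp B) := by
  obtain ⟨φ, b, hb⟩ := AddCommGroup.exists_addMonoidHom_int_apply_eq_one B
  let powChar (z : ℂˣ) : CharGp B :=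
    AddMonoidHom.toMultiplicativeLeft ((zmultiplesHom (Additive ℂˣ) (Additive.ofMul z)).comp φ)
  refine Infinite.of_injective powChar fun z w h => ?_
  simpa [powChar, hb] using DFunLike.congr_fun h (ofAdd b)

theorem CharGp.infinite_iff (B : Type*) [AddCommGroup B] [AddGroup.FG B] :
    Infinite (CharGp B) ↔ Infinite B := by
  refine ⟨fun _ => ?_, fun _ => inferInstance⟩
  by_contra hB
  have : Finite B := not_infinite_iff_finite.mp hB
  exact not_finite (CharGp B)

theorem rkOf_eq_finrank_int (B : Type*) [AddCommGroup B] : rkOf B = Module.finrank ℤ B := by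
  have : IsLocalizedModule (nonZeroDivisors ℤ) (TensorProduct.mk ℤ ℚ B 1) :=
    (isLocalizedModule_iff_isBaseChange _ ℚ _).mpr (TensorProduct.isBaseChange ℤ B ℚ)
  rw [rkOf, IsLocalization.finrank_eq ℚ (nonZeroDivisors ℤ) le_rfl]
  convert IsLocalizedModule.finrank_eq (nonZeroDivisors ℤ) (TensorProduct.mk ℤ ℚ B 1) le_rfl
  exact Subsingleton.elim _ _

theorem rkOf_add_rkOf_quotient {H : Type*} [AddCommGroup H] [AddGroup.FG H] (N : AddSubgroup H) :
    rkOf N + rkOf (H ⧸ N) = rkOf H := by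
  have : Module.Finite ℤ H := Module.Finite.iff_addGroup_fg.mpr ‹_›
  simp only [rkOf_eq_finrank_int]
  rw [add_comm]
  exact (AddSubgroup.toIntSubmodule N).finrank_quotient_add_finrank

theorem rkOf_pos_iff_infinite (B : Type*) [AddCommGroup B] [AddGroup.FG B] :
    0 < rkOf B ↔ Infinite B := by
  have : Module.Finite ℤ B := Module.Finite.iff_addGroup_fg.mpr ‹_›
  rw [rkOf_eq_finrank_int, Nat.pos_iff_ne_zero, Ne, Module.finrank_eq_zero_iff,
    ← not_finite_iff_infinite, not_iff_not]
  constructor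
  · intro h
    exact Module.finite_of_fg_torsion B fun x => by
      obtain ⟨a, ha, hax⟩ := h x
      exact ⟨⟨a, mem_nonZeroDivisors_of_ne_zero ha⟩, hax⟩
  · intro _ x
    exact ⟨addOrderOf x, by exact_mod_cast (addOrderOf_pos x).ne',
      by simp [natCast_zsmul, addOrderOf_nsmul_eq_zero]⟩

theorem rkOf_lt_iff_infinite_quotient {H : Type*} [AddCommGroup H] [AddGroup.FG H]
    (N : AddSubgroup H) : rkOf N < rkOf H ↔ Infinite (H ⧸ N) := by
  rw [← rkOf_add_rkOf_quotient N, ← rkOf_pos_iff_infinite]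
  omega

section CharacterSets

variable {H : Type*} [AddCommGroup H]

theorem charV_eq_range_comp_mk (N : AddSubgroup H) :
    charV N =
      Set.range fun χ : CharGp (H ⧸ N) => χ.comp (QuotientAddGroup.mk' N).toMultiplicative := by
  ext ρ
  constructor
  · intro hρ
    exact CharGp.exists_comp_eq (QuotientAddGroup.mk' N) ρ (by rwa [QuotientAddGroup.ker_mk'])
  · rintro ⟨χ, rfl⟩ x hx
    simp [(QuotientAddGroup.eq_zero_iff x).2 hx]

theorem charV_infinite_iff [AddGroup.FG H] (N : AddSubgroup H) :
    (charV N).Infinite ↔ Infinite (H ⧸ N) := by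
  rw [charV_eq_range_comp_mk, Set.infinite_range_iff
    fun χ ψ h => (MonoidHom.cancel_right (QuotientAddGroup.mk'_surjective N)).1 h]
  exact CharGp.infinite_iff _

theorem charV_sup (K ξ : AddSubgroup H) : charV (K ⊔ ξ) = charV K ∩ charV ξ := by
  ext ρ
  refine ⟨fun h => ⟨fun x hx => h x (AddSubgroup.mem_sup_left hx),
    fun y hy => h y (AddSubgroup.mem_sup_right hy)⟩, ?_⟩
  rintro ⟨hK, hξ⟩ x hx
  obtain ⟨k, hk, y, hy, rfl⟩ := AddSubgroup.mem_sup.1 hx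
  rw [ofAdd_add, map_mul, hK k hk, hξ y hy, one_mul]

theorem mul_mem_charV_iff {σ τ : CharGp H} {ξ : AddSubgroup H} (hσ : σ ∈ charV ξ) :
    σ * τ ∈ charV ξ ↔ τ ∈ charV ξ :=
  forall₂_congr fun x hx => by rw [MonoidHom.mul_apply, hσ x hx, one_mul]

/- Group identities in `CharGp H` are given as terms below: `rw` and `simp` do not match the
`MulOneClass ℂˣ` instance in its type against the one coming from `CommGroup ℂˣ`. -/
theorem mem_transTorus_iff {η ρ : CharGp H} {ξ : AddSubgroup H} :
    ρ ∈ transTorus η ξ ↔ η⁻¹ * ρ ∈ charV ξ := by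
  constructor
  · rintro ⟨σ, hσ, rfl⟩
    rwa [show η⁻¹ * (η * σ) = σ from inv_mul_cancel_left η σ]
  · exact fun h => ⟨η⁻¹ * ρ, h, mul_inv_cancel_left η ρ⟩

theorem transTorus_infinite_iff (η : CharGp H) (ξ : AddSubgroup H) :
    (transTorus η ξ).Infinite ↔ (charV ξ).Infinite :=
  Set.infinite_image_iff (mul_right_injective η).injOn

theorem charV_inter_transTorus_eq {K ξ : AddSubgroup H} {η ρ₀ : CharGp H}
    (hρ₀ : ρ₀ ∈ charV K ∩ transTorus η ξ) : charV K ∩ transTorus η ξ = transTorus ρ₀ (K ⊔ ξ) := by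
  obtain ⟨hρ₀K, hρ₀ξ⟩ := hρ₀
  rw [mem_transTorus_iff] at hρ₀ξ
  ext ρ
  have hK : ρ₀⁻¹ * ρ ∈ charV K ↔ ρ ∈ charV K := by
    rw [← mul_mem_charV_iff hρ₀K, show ρ₀ * (ρ₀⁻¹ * ρ) = ρ from mul_inv_cancel_left ρ₀ ρ]
  have hξ : ρ₀⁻¹ * ρ ∈ charV ξ ↔ η⁻¹ * ρ ∈ charV ξ := by
    rw [← mul_mem_charV_iff hρ₀ξ,
      show η⁻¹ * ρ₀ * (ρ₀⁻¹ * ρ) = η⁻¹ * ρ from mul_mul_inv_mul_cancel η⁻¹ ρ₀ ρ]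
  rw [Set.mem_inter_iff, mem_transTorus_iff, mem_transTorus_iff, charV_sup, Set.mem_inter_iff,
    hK, hξ]

theorem charV_inter_transTorus_nonempty_iff {K ξ : AddSubgroup H} {η : CharGp H} :
    (charV K ∩ transTorus η ξ).Nonempty ↔ ∀ z ∈ K ⊓ ξ, η (ofAdd z) = 1 := by
  constructor
  · rintro ⟨ρ, hρK, hρξ⟩ z ⟨hzK, hzξ⟩
    rw [mem_transTorus_iff] at hρξ
    have := hρξ z hzξ
    rwa [MonoidHom.mul_apply, MonoidHom.inv_apply, inv_mul_eq_one, hρK z hzK] at this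
  · intro hη
    obtain ⟨χ, hχ⟩ := CharGp.exists_comp_eq ((QuotientAddGroup.mk' K).comp ξ.subtype)
      (η.comp ξ.subtype.toMultiplicative) fun y hy => hη y ⟨by simpa using hy, y.2⟩
    refine ⟨χ.comp (QuotientAddGroup.mk' K).toMultiplicative, ?_, ?_⟩
    · intro x hx
      simp [(QuotientAddGroup.eq_zero_iff x).2 hx]
    · rw [mem_transTorus_iff]
      intro y hy
      have hχy : χ (ofAdd (y : H ⧸ K)) = η (ofAdd y) := DFunLike.congr_fun hχ (ofAdd ⟨y, hy⟩)
      rw [MonoidHom.mul_apply, MonoidHom.inv_apply, inv_mul_eq_one]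
      exact hχy.symm

theorem charV_inter_transTorus_infinite_iff {K ξ : AddSubgroup H} {η : CharGp H} :
    (charV K ∩ transTorus η ξ).Infinite ↔
      (charV (K ⊔ ξ)).Infinite ∧ (charV K ∩ transTorus η ξ).Nonempty := by
  refine ⟨fun h => ?_, fun ⟨h, ρ₀, hρ₀⟩ => ?_⟩
  · obtain ⟨ρ₀, hρ₀⟩ := h.nonempty
    rw [charV_inter_transTorus_eq hρ₀, transTorus_infinite_iff] at h
    exact ⟨h, ρ₀, hρ₀⟩
  · rwa [charV_inter_transTorus_eq hρ₀, transTorus_infinite_iff]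

end CharacterSets

theorem statement13_general {H A : Type*} [AddCommGroup H] [AddGroup.FG H]
    [AddCommGroup A]
    (ν : H →+ A)
    (ξ : AddSubgroup H) (η : CharGp H) :
    {ρ : CharGp H | (∀ x ∈ ν.ker, ρ (Multiplicative.ofAdd x) = 1) ∧
        ∀ y ∈ ξ, (η⁻¹ * ρ) (Multiplicative.ofAdd y) = 1}.Infinite ↔
      rkOf ↥(ν.ker ⊔ ξ) < rkOf H ∧ ∀ z ∈ ν.ker ⊓ ξ, η (Multiplicative.ofAdd z) = 1 := by
  have hS : {ρ : CharGp H | (∀ x ∈ ν.ker, ρ (Multiplicative.ofAdd x) = 1) ∧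
      ∀ y ∈ ξ, (η⁻¹ * ρ) (Multiplicative.ofAdd y) = 1} = charV ν.ker ∩ transTorus η ξ :=
    Set.ext fun ρ => and_congr_right' mem_transTorus_iff.symm
  rw [hS, charV_inter_transTorus_infinite_iff, charV_inter_transTorus_nonempty_iff,
    charV_infinite_iff, rkOf_lt_iff_infinite_quotient]

/-- `im(ν̂) ∩ ηV(ξ)` is infinite if and only if `rank(ker ν + ξ) < rank H` and `η`
takes the value `1` on `ker ν ∩ ξ`. -/
theorem statement13 {H A : Type*} [AddCommGroup H] [AddGroup.FG H]
    [AddCommGroup A] [AddGroup.FG A]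
    (ν : H →+ A) (hν : Function.Surjective ν)
    (ξ : AddSubgroup H) (η : CharGp H) :
    {ρ : CharGp H | (∀ x ∈ ν.ker, ρ (Multiplicative.ofAdd x) = 1) ∧
        ∀ y ∈ ξ, (η⁻¹ * ρ) (Multiplicative.ofAdd y) = 1}.Infinite ↔
      rkOf ↥(ν.ker ⊔ ξ) < rkOf H ∧ ∀ z ∈ ν.ker ⊓ ξ, η (Multiplicative.ofAdd z) = 1 :=
  statement13_general ν ξ η
end
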